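/- Behavior of the degree-two tree invariant under orientation reversal: let G be a Gauss diagram on 3 strings and let G' be obtained from G by reversing the orientation of string 1. Then Z_{{2,3},1}(G') = −Z_{{2,3},1}(G) + Z_{{2},1}(G) · Z_{{3},1}(G). -/
import Mathlib


/-!
Combinatorial Gauss diagrams on `n` strings and the tree invariants `Z I j`.

A Gauss diagram is encoded by a finite set of arrows; each arrow records the
string (an element of `Fin n`) and the position (a rational number, increasing
in the direction of the orientation of the string) of its tail and of its head,
together with a sign `±1`.  Only the induced combinatorial data (linear order of
the endpoints along each string, the tail/head pairing and the signs) is ever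
used by the definitions below.

The tree invariant `Z I j G = ∑_{A ∈ 𝒜_{I,j}} sign(A) ⟨A, G⟩` is computed as a
signed count over all subsets `S` of the arrows of `G` that form a planar tree
diagram with leaves on `I` and trunk on `j`: each pair `(A, φ)` of a planar tree
diagram `A ∈ 𝒜_{I,j}` together with an embedding `φ : A → G` corresponds
bijectively to the subset `S = Im φ` of the arrows of `G`, which is itself a
planar tree diagram with leaves on `I` and trunk on `j`; the contribution of the
pair to the sum is `sign(A) · sign(φ) = (-1)^{#right-pointing arrows of S} · ∏_{a ∈ S} sign(a)`.
-/

open scoped Classical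

/-- An arrow of a Gauss diagram on `n` strings: a tail endpoint, a head
endpoint (each given by the string it lies on and its position along that
string) and a sign. -/
structure GArrow (n : ℕ) where
  tailStr : Fin n
  tailPos : ℚ
  headStr : Fin n
  headPos : ℚ
  sign : ℤ
deriving DecidableEq

namespace GArrow

/-- The two endpoints of an arrow: `false` is the tail, `true` is the head. -/
def ep {n : ℕ} (a : GArrow n) : Bool → Fin n × ℚ
  | false => (a.tailStr, a.tailPos)
  | true => (a.headStr, a.headPos)

end GArrow

/-- A Gauss diagram on `n` strings: a finite set of signed arrows with all
endpoints pairwise distinct, and all signs equal to `±1`. -/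
structure GaussDiagram (n : ℕ) where
  arrows : Finset (GArrow n)
  sign_pm : ∀ a ∈ arrows, a.sign = 1 ∨ a.sign = -1
  endpoints_distinct : ∀ a ∈ arrows, ∀ b ∈ arrows, ∀ s t : Bool,
    a.ep s = b.ep t → a = b ∧ s = t

/-- `S` is a tree diagram with leaves on `I` and trunk on `j`:
* the head and the tail of every arrow lie on different strings;
* for each `i ∈ I` there is exactly one arrow tail on string `i`, and there are
  no arrow tails on strings outside `I`;
* every arrow head lies on a string of `I ∪ {j}`;
* on each string `i ∈ I` all arrow heads precede the unique arrow tail. -/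
def IsTreeDiagram {n : ℕ} (I : Finset (Fin n)) (j : Fin n)
    (S : Finset (GArrow n)) : Prop :=
  (∀ a ∈ S, a.tailStr ≠ a.headStr) ∧
  (∀ i ∈ I, ∃! a, a ∈ S ∧ a.tailStr = i) ∧
  (∀ a ∈ S, a.tailStr ∈ I) ∧
  (∀ a ∈ S, a.headStr ∈ I ∨ a.headStr = j) ∧
  (∀ a ∈ S, ∀ b ∈ S, a.headStr = b.tailStr → a.headPos < b.tailPos)

/-- `ParentRel S s t` : string `s` is the parent of string `t` in the rooted
tree determined by the tree diagram `S`, i.e. the (unique) arrow with tail on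
`t` has its head on `s`. -/
def ParentRel {n : ℕ} (S : Finset (GArrow n)) (s t : Fin n) : Prop :=
  ∃ a ∈ S, a.tailStr = t ∧ a.headStr = s

/-- `Descends S s k` : string `k` belongs to the subtree of string `s` (it is
`s` itself or an iterated child of `s`). -/
def Descends {n : ℕ} (S : Finset (GArrow n)) : Fin n → Fin n → Prop :=
  Relation.ReflTransGen (ParentRel S)

/-- `S` is a *planar* tree diagram with leaves on `I` and trunk on `j`: the
rooted tree `T_S` determined by `S` can be drawn in the plane so that the
clockwise order of its leaves, starting from the root on string `j`, is the
order of the string numbers.  Combinatorially this says that: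
* the parent relation makes the strings carrying the arrows into a tree rooted
  at `j` (every leaf string is an iterated child of `j`);
* the whole subtree hanging from an arrow lies on the same side of the string
  carrying the head of that arrow as its tail does;
* two subtrees hanging on the same side of a common string are ordered, along
  that string, compatibly with the order of the strings: for two arrow heads on
  the same string, with both tails on the left, the subtree attached closer to
  the beginning of the string is the one carrying the larger string numbers,
  while for two tails on the right it is the one carrying the smaller string
  numbers. -/
def IsPlanarTreeDiagram {n : ℕ} (I : Finset (Fin n)) (j : Fin n)
    (S : Finset (GArrow n)) : Prop :=
  IsTreeDiagram I j S ∧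
  (∀ i ∈ I, Relation.TransGen (ParentRel S) j i) ∧
  (∀ a ∈ S, ∀ k : Fin n, Descends S a.tailStr k →
    (a.tailStr < a.headStr ↔ k < a.headStr)) ∧
  (∀ a ∈ S, ∀ b ∈ S, a.headStr = b.headStr → a.headPos < b.headPos →
    ∀ k k' : Fin n, Descends S a.tailStr k → Descends S b.tailStr k' →
      ((a.tailStr < a.headStr → b.tailStr < b.headStr → k' < k) ∧
       (a.headStr < a.tailStr → b.headStr < b.tailStr → k < k')))

/-- The sign `(-1)^q` of an (embedded) arrow diagram, where `q` is the number
of right-pointing arrows (tail on a string of smaller number than the head). -/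
noncomputable def treeSign {n : ℕ} (S : Finset (GArrow n)) : ℤ :=
  (-1) ^ (S.filter fun a => a.tailStr < a.headStr).card

/-- The tree invariant `Z_{I,j}(G) = ∑_{A ∈ 𝒜_{I,j}} sign(A)·⟨A,G⟩`, computed
as the signed count of embedded planar tree diagrams with leaves on `I` and
trunk on `j` inside `G`.  In particular `Z ∅ j G = 1` (only `S = ∅`
contributes). -/
noncomputable def Z {n : ℕ} (I : Finset (Fin n)) (j : Fin n)
    (G : GaussDiagram n) : ℤ :=
  ∑ S ∈ G.arrows.powerset,
    if IsPlanarTreeDiagram I j S then treeSign S * ∏ a ∈ S, a.sign else 0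

/-- Reversing the orientation of string `i`: the linear order of the endpoints
on string `i` is reversed (positions are negated) and the sign of every arrow
with exactly one endpoint on string `i` is multiplied by `-1`. -/
def reverseArrow {n : ℕ} (i : Fin n) (a : GArrow n) : GArrow n where
  tailStr := a.tailStr
  tailPos := if a.tailStr = i then -a.tailPos else a.tailPos
  headStr := a.headStr
  headPos := if a.headStr = i then -a.headPos else a.headPos
  sign := if (a.tailStr = i ∧ a.headStr ≠ i) ∨ (a.tailStr ≠ i ∧ a.headStr = i)
    then -a.sign else a.sign

/-! ### Auxiliary lemmas for the orientation-reversal theorem -/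

private lemma fin3 (x : Fin 3) : x = 0 ∨ x = 1 ∨ x = 2 := by
  revert x; decide

lemma parentRel_pair {a b : GArrow 3} {s t : Fin 3} :
    ParentRel {a, b} s t ↔ (a.tailStr = t ∧ a.headStr = s) ∨ (b.tailStr = t ∧ b.headStr = s) := by
  constructor
  · rintro ⟨c, hc, h1, h2⟩
    rcases Finset.mem_insert.1 hc with rfl | hc
    · exact Or.inl ⟨h1, h2⟩
    · rw [Finset.mem_singleton] at hc
      subst hc
      exact Or.inr ⟨h1, h2⟩
  · rintro (⟨h1, h2⟩ | ⟨h1, h2⟩)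
    · exact ⟨a, Finset.mem_insert_self _ _, h1, h2⟩
    · exact ⟨b, by simp, h1, h2⟩

lemma descends_no_child {S : Finset (GArrow 3)} {s : Fin 3}
    (h : ∀ t, ¬ ParentRel S s t) {k : Fin 3} (hd : Descends S s k) : k = s :=
  (Relation.reflTransGen_iff_eq h).1 hd

/-- The combinatorial condition describing embedded planar tree diagrams with
leaves on `{1,2}` and trunk on `0`. -/
def Cond12 (a b : GArrow 3) : Prop :=
  a.tailStr = 1 ∧ b.tailStr = 2 ∧
    ((a.headStr = 0 ∧ b.headStr = 0 ∧ a.headPos < b.headPos) ∨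
     (a.headStr = 2 ∧ b.headStr = 0 ∧ a.headPos < b.tailPos) ∨
     (a.headStr = 0 ∧ b.headStr = 1 ∧ b.headPos < a.tailPos))

lemma ne_of_cond12 {a b : GArrow 3} (h : Cond12 a b) : a ≠ b := by
  intro e
  have h1 := h.1
  rw [e, h.2.1] at h1
  exact absurd h1 (by decide)

lemma planar_of_cond12 {a b : GArrow 3} (h : Cond12 a b) :
    IsPlanarTreeDiagram {1, 2} 0 {a, b} := by
  obtain ⟨ha1, hb2, htype⟩ := h
  have hmem : ∀ c : GArrow 3, c ∈ ({a, b} : Finset (GArrow 3)) ↔ c = a ∨ c = b := by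
    intro c; simp
  have huniq : ∀ i ∈ ({1, 2} : Finset (Fin 3)),
      ∃! c, c ∈ ({a, b} : Finset (GArrow 3)) ∧ c.tailStr = i := by
    intro i hi
    rcases Finset.mem_insert.1 hi with rfl | hi
    · refine ⟨a, ⟨(hmem a).2 (Or.inl rfl), ha1⟩, ?_⟩
      rintro c ⟨hc, hct⟩
      rcases (hmem c).1 hc with rfl | rfl
      · rfl
      · rw [hb2] at hct; exact absurd hct (by decide)
    · rw [Finset.mem_singleton] at hi; subst hi
      refine ⟨b, ⟨(hmem b).2 (Or.inr rfl), hb2⟩, ?_⟩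
      rintro c ⟨hc, hct⟩
      rcases (hmem c).1 hc with rfl | rfl
      · rw [ha1] at hct; exact absurd hct (by decide)
      · rfl
  have htails : ∀ c ∈ ({a, b} : Finset (GArrow 3)), c.tailStr ∈ ({1, 2} : Finset (Fin 3)) := by
    intro c hc
    rcases (hmem c).1 hc with rfl | rfl
    · rw [ha1]; decide
    · rw [hb2]; decide
  have hflt : ∀ k : Fin 3, ¬ k < (0 : Fin 3) := by decide
  rcases htype with ⟨hA1, hA2, hA3⟩ | ⟨hA1, hA2, hA3⟩ | ⟨hA1, hA2, hA3⟩
  · -- Type A : both heads on string 0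
    have hnc1 : ∀ t, ¬ ParentRel {a, b} (1 : Fin 3) t := by
      intro t ht
      rcases parentRel_pair.1 ht with ⟨_, h2⟩ | ⟨_, h2⟩
      · rw [hA1] at h2; exact absurd h2 (by decide)
      · rw [hA2] at h2; exact absurd h2 (by decide)
    have hnc2 : ∀ t, ¬ ParentRel {a, b} (2 : Fin 3) t := by
      intro t ht
      rcases parentRel_pair.1 ht with ⟨_, h2⟩ | ⟨_, h2⟩
      · rw [hA1] at h2; exact absurd h2 (by decide)
      · rw [hA2] at h2; exact absurd h2 (by decide)
    refine ⟨⟨?_, huniq, htails, ?_, ?_⟩, ?_, ?_, ?_⟩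
    · intro c hc
      rcases (hmem c).1 hc with rfl | rfl
      · rw [ha1, hA1]; decide
      · rw [hb2, hA2]; decide
    · intro c hc
      rcases (hmem c).1 hc with rfl | rfl
      · exact Or.inr hA1
      · exact Or.inr hA2
    · intro c hc d hd hcd
      rcases (hmem c).1 hc with rfl | rfl <;> rcases (hmem d).1 hd with rfl | rfl
      · rw [hA1, ha1] at hcd; exact absurd hcd (by decide)
      · rw [hA1, hb2] at hcd; exact absurd hcd (by decide)
      · rw [hA2, ha1] at hcd; exact absurd hcd (by decide)
      · rw [hA2, hb2] at hcd; exact absurd hcd (by decide)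
    · intro i hi
      rcases Finset.mem_insert.1 hi with rfl | hi
      · exact Relation.TransGen.single (parentRel_pair.2 (Or.inl ⟨ha1, hA1⟩))
      · rw [Finset.mem_singleton] at hi; subst hi
        exact Relation.TransGen.single (parentRel_pair.2 (Or.inr ⟨hb2, hA2⟩))
    · intro c hc k _
      rcases (hmem c).1 hc with rfl | rfl
      · rw [hA1]; exact iff_of_false (hflt _) (hflt _)
      · rw [hA2]; exact iff_of_false (hflt _) (hflt _)
    · intro c hc d hd hh hlt k k' hk hk'
      rcases (hmem c).1 hc with rfl | rfl <;> rcases (hmem d).1 hd with rfl | rfl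
      · exact absurd hlt (lt_irrefl _)
      · -- (a, b)
        rw [ha1] at hk
        rw [hb2] at hk'
        have hk1 := descends_no_child hnc1 hk
        have hk2 := descends_no_child hnc2 hk'
        subst hk1; subst hk2
        constructor
        · intro h1 _
          rw [ha1, hA1] at h1; exact absurd h1 (by decide)
        · intro _ _; decide
      · exact absurd hA3 (lt_asymm hlt)
      · exact absurd hlt (lt_irrefl _)
  · -- Type B : a : 1 → 2, b : 2 → 0
    have hnc1 : ∀ t, ¬ ParentRel {a, b} (1 : Fin 3) t := by
      intro t ht
      rcases parentRel_pair.1 ht with ⟨_, h2⟩ | ⟨_, h2⟩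
      · rw [hA1] at h2; exact absurd h2 (by decide)
      · rw [hA2] at h2; exact absurd h2 (by decide)
    refine ⟨⟨?_, huniq, htails, ?_, ?_⟩, ?_, ?_, ?_⟩
    · intro c hc
      rcases (hmem c).1 hc with rfl | rfl
      · rw [ha1, hA1]; decide
      · rw [hb2, hA2]; decide
    · intro c hc
      rcases (hmem c).1 hc with rfl | rfl
      · exact Or.inl (by rw [hA1]; decide)
      · exact Or.inr hA2
    · intro c hc d hd hcd
      rcases (hmem c).1 hc with rfl | rfl <;> rcases (hmem d).1 hd with rfl | rfl
      · rw [hA1, ha1] at hcd; exact absurd hcd (by decide)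
      · exact hA3
      · rw [hA2, ha1] at hcd; exact absurd hcd (by decide)
      · rw [hA2, hb2] at hcd; exact absurd hcd (by decide)
    · intro i hi
      rcases Finset.mem_insert.1 hi with rfl | hi
      · exact Relation.TransGen.head (parentRel_pair.2 (Or.inr ⟨hb2, hA2⟩))
          (Relation.TransGen.single (parentRel_pair.2 (Or.inl ⟨ha1, hA1⟩)))
      · rw [Finset.mem_singleton] at hi; subst hi
        exact Relation.TransGen.single (parentRel_pair.2 (Or.inr ⟨hb2, hA2⟩))
    · intro c hc k hk
      rcases (hmem c).1 hc with rfl | rfl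
      · rw [ha1] at hk
        have hk1 := descends_no_child hnc1 hk
        subst hk1
        rw [ha1, hA1]
      · rw [hA2]; exact iff_of_false (hflt _) (hflt _)
    · intro c hc d hd hh hlt k k' hk hk'
      rcases (hmem c).1 hc with rfl | rfl <;> rcases (hmem d).1 hd with rfl | rfl
      · exact absurd hlt (lt_irrefl _)
      · rw [hA1, hA2] at hh; exact absurd hh (by decide)
      · rw [hA2, hA1] at hh; exact absurd hh (by decide)
      · exact absurd hlt (lt_irrefl _)
  · -- Type C : a : 1 → 0, b : 2 → 1
    have hnc2 : ∀ t, ¬ ParentRel {a, b} (2 : Fin 3) t := by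
      intro t ht
      rcases parentRel_pair.1 ht with ⟨_, h2⟩ | ⟨_, h2⟩
      · rw [hA1] at h2; exact absurd h2 (by decide)
      · rw [hA2] at h2; exact absurd h2 (by decide)
    refine ⟨⟨?_, huniq, htails, ?_, ?_⟩, ?_, ?_, ?_⟩
    · intro c hc
      rcases (hmem c).1 hc with rfl | rfl
      · rw [ha1, hA1]; decide
      · rw [hb2, hA2]; decide
    · intro c hc
      rcases (hmem c).1 hc with rfl | rfl
      · exact Or.inr hA1
      · exact Or.inl (by rw [hA2]; decide)
    · intro c hc d hd hcd
      rcases (hmem c).1 hc with rfl | rfl <;> rcases (hmem d).1 hd with rfl | rfl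
      · rw [hA1, ha1] at hcd; exact absurd hcd (by decide)
      · rw [hA1, hb2] at hcd; exact absurd hcd (by decide)
      · exact hA3
      · rw [hA2, hb2] at hcd; exact absurd hcd (by decide)
    · intro i hi
      rcases Finset.mem_insert.1 hi with rfl | hi
      · exact Relation.TransGen.single (parentRel_pair.2 (Or.inl ⟨ha1, hA1⟩))
      · rw [Finset.mem_singleton] at hi; subst hi
        exact Relation.TransGen.head (parentRel_pair.2 (Or.inl ⟨ha1, hA1⟩))
          (Relation.TransGen.single (parentRel_pair.2 (Or.inr ⟨hb2, hA2⟩)))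
    · intro c hc k hk
      rcases (hmem c).1 hc with rfl | rfl
      · rw [hA1]; exact iff_of_false (hflt _) (hflt _)
      · rw [hb2] at hk
        have hk1 := descends_no_child hnc2 hk
        subst hk1
        rw [hb2, hA2]
    · intro c hc d hd hh hlt k k' hk hk'
      rcases (hmem c).1 hc with rfl | rfl <;> rcases (hmem d).1 hd with rfl | rfl
      · exact absurd hlt (lt_irrefl _)
      · rw [hA1, hA2] at hh; exact absurd hh (by decide)
      · rw [hA2, hA1] at hh; exact absurd hh (by decide)
      · exact absurd hlt (lt_irrefl _)
lemma cond12_of_planar {G : GaussDiagram 3} {S : Finset (GArrow 3)}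
    (hS : S ⊆ G.arrows) (hp : IsPlanarTreeDiagram {1, 2} 0 S) :
    ∃ a b, S = {a, b} ∧ Cond12 a b := by
  obtain ⟨⟨hne, huniq, htail, hhead, hord⟩, htrans, hside, horder⟩ := hp
  obtain ⟨a, ⟨haS, ha1⟩, hau⟩ := huniq 1 (by decide)
  obtain ⟨b, ⟨hbS, hb2⟩, hbu⟩ := huniq 2 (by decide)
  have hab : a ≠ b := by
    intro e; rw [e, hb2] at ha1; exact absurd ha1 (by decide)
  have hSeq : S = {a, b} := by
    apply Finset.Subset.antisymm
    · intro c hc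
      have hct := htail c hc
      rw [Finset.mem_insert, Finset.mem_singleton] at hct ⊢
      rcases hct with h | h
      · exact Or.inl (hau c ⟨hc, h⟩)
      · exact Or.inr (hbu c ⟨hc, h⟩)
    · intro c hc
      rw [Finset.mem_insert, Finset.mem_singleton] at hc
      rcases hc with rfl | rfl
      · exact haS
      · exact hbS
  have haH : a.headStr = 0 ∨ a.headStr = 2 := by
    rcases fin3 a.headStr with h | h | h
    · exact Or.inl h
    · exact absurd (ha1.trans h.symm) (hne a haS)
    · exact Or.inr h
  have hbH : b.headStr = 0 ∨ b.headStr = 1 := by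
    rcases fin3 b.headStr with h | h | h
    · exact Or.inl h
    · exact Or.inr h
    · exact absurd (hb2.trans h.symm) (hne b hbS)
  refine ⟨a, b, hSeq, ha1, hb2, ?_⟩
  rcases haH with hA | hA <;> rcases hbH with hB | hB
  · -- heads (0, 0)
    refine Or.inl ⟨hA, hB, ?_⟩
    have hnepos : a.headPos ≠ b.headPos := by
      intro e
      exact hab (G.endpoints_distinct a (hS haS) b (hS hbS) true true
        (by simp [GArrow.ep, hA, hB, e])).1
    rcases lt_trichotomy a.headPos b.headPos with h | h | h
    · exact h
    · exact absurd h hnepos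
    · exfalso
      have hda : Descends S b.tailStr 2 := by
        rw [hb2]; exact Relation.ReflTransGen.refl
      have hdb : Descends S a.tailStr 1 := by
        rw [ha1]; exact Relation.ReflTransGen.refl
      have hres := (horder b hbS a haS (hB.trans hA.symm) h 2 1 hda hdb).2
        (by rw [hB, hb2]; decide) (by rw [hA, ha1]; decide)
      exact absurd hres (by decide)
  · -- heads (0, 1)
    exact Or.inr (Or.inr ⟨hA, hB, hord b hbS a haS (hB.trans ha1.symm)⟩)
  · -- heads (2, 0)
    exact Or.inr (Or.inl ⟨hA, hB, hord a haS b hbS (hA.trans hb2.symm)⟩)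
  · -- heads (2, 1) : impossible
    exfalso
    have hstep : ∀ s t : Fin 3, ParentRel S s t → s = 2 ∨ s = 1 := by
      rintro s t ⟨c, hc, _, hch⟩
      rw [hSeq, Finset.mem_insert, Finset.mem_singleton] at hc
      rcases hc with rfl | rfl
      · exact Or.inl (hch ▸ hA)
      · exact Or.inr (hch ▸ hB)
    obtain ⟨c, hc0, -⟩ := (Relation.TransGen.head'_iff).1 (htrans 1 (by decide))
    rcases hstep _ _ hc0 with h | h <;> exact absurd h (by decide)

lemma cond1_of_planar {i : Fin 3} {S : Finset (GArrow 3)}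
    (hp : IsPlanarTreeDiagram {i} 0 S) :
    ∃ a, S = {a} ∧ a.tailStr = i ∧ a.headStr = 0 := by
  obtain ⟨⟨hne, huniq, htail, hhead, -⟩, -, -, -⟩ := hp
  obtain ⟨a, ⟨haS, hat⟩, hau⟩ := huniq i (Finset.mem_singleton_self i)
  refine ⟨a, ?_, hat, ?_⟩
  · apply Finset.Subset.antisymm
    · intro c hc
      have hct := htail c hc
      rw [Finset.mem_singleton] at hct
      rw [Finset.mem_singleton]
      exact hau c ⟨hc, hct⟩
    · intro c hc
      rw [Finset.mem_singleton] at hc; subst hc; exact haS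
  · rcases hhead a haS with h | h
    · rw [Finset.mem_singleton] at h
      exact absurd (hat.trans h.symm) (hne a haS)
    · exact h

lemma planar_of_cond1 {i : Fin 3} (hi : i ≠ 0) {a : GArrow 3}
    (h1 : a.tailStr = i) (h2 : a.headStr = 0) :
    IsPlanarTreeDiagram {i} 0 {a} := by
  have hflt : ∀ k : Fin 3, ¬ k < (0 : Fin 3) := by decide
  refine ⟨⟨?_, ?_, ?_, ?_, ?_⟩, ?_, ?_, ?_⟩
  · intro c hc
    rw [Finset.mem_singleton] at hc; subst hc
    rw [h1, h2]; exact hi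
  · intro k hk
    rw [Finset.mem_singleton] at hk; subst hk
    refine ⟨a, ⟨Finset.mem_singleton_self a, h1⟩, ?_⟩
    rintro c ⟨hc, -⟩
    exact Finset.mem_singleton.1 hc
  · intro c hc
    rw [Finset.mem_singleton] at hc; subst hc
    rw [Finset.mem_singleton]; exact h1
  · intro c hc
    rw [Finset.mem_singleton] at hc; subst hc
    exact Or.inr h2
  · intro c hc d hd hcd
    rw [Finset.mem_singleton] at hc hd; subst hc; subst hd
    rw [h2, h1] at hcd
    exact absurd hcd.symm hi
  · intro k hk
    rw [Finset.mem_singleton] at hk; subst hk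
    exact Relation.TransGen.single ⟨a, Finset.mem_singleton_self a, h1, h2⟩
  · intro c hc k _
    rw [Finset.mem_singleton] at hc; subst hc
    rw [h2]
    exact iff_of_false (hflt _) (hflt _)
  · intro c hc d hd _ hlt _ _ _ _
    rw [Finset.mem_singleton] at hc hd; subst hc; subst hd
    exact absurd hlt (lt_irrefl _)

/-- The contribution of an embedded planar pair. -/
noncomputable def pairTerm (a b : GArrow 3) : ℤ :=
  if Cond12 a b then (if a.headStr = 2 then -1 else 1) * (a.sign * b.sign) else 0

/-- The contribution of an embedded planar single arrow. -/
noncomputable def singTerm (i : Fin 3) (a : GArrow 3) : ℤ :=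
  if a.tailStr = i ∧ a.headStr = 0 then a.sign else 0

lemma treeSign_pair {a b : GArrow 3} (h : Cond12 a b) :
    treeSign {a, b} * ∏ c ∈ ({a, b} : Finset (GArrow 3)), c.sign
      = (if a.headStr = 2 then -1 else 1) * (a.sign * b.sign) := by
  have hab := ne_of_cond12 h
  obtain ⟨ha1, hb2, ht⟩ := h
  rw [Finset.prod_pair hab]
  congr 1
  unfold treeSign
  have hbn : ¬ b.tailStr < b.headStr := by
    rcases ht with ⟨-, h2, -⟩ | ⟨-, h2, -⟩ | ⟨-, h2, -⟩ <;> rw [hb2, h2] <;> decide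
  rw [Finset.filter_insert, Finset.filter_singleton, if_neg hbn]
  rcases ht with ⟨h1, -, -⟩ | ⟨h1, -, -⟩ | ⟨h1, -, -⟩
  · rw [if_neg (by rw [ha1, h1]; decide), if_neg (by rw [h1]; decide)]
    simp
  · rw [if_pos (by rw [ha1, h1]; decide), if_pos h1]
    simp
  · rw [if_neg (by rw [ha1, h1]; decide), if_neg (by rw [h1]; decide)]
    simp

lemma Z12_eq (G : GaussDiagram 3) :
    Z {1, 2} 0 G = ∑ p ∈ G.arrows ×ˢ G.arrows, pairTerm p.1 p.2 := by
  have h2 : ∑ p ∈ G.arrows ×ˢ G.arrows, pairTerm p.1 p.2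
      = ∑ p ∈ (G.arrows ×ˢ G.arrows).filter (fun p => Cond12 p.1 p.2),
          (if p.1.headStr = 2 then (-1 : ℤ) else 1) * (p.1.sign * p.2.sign) := by
    rw [Finset.sum_filter]
    exact Finset.sum_congr rfl fun p _ => rfl
  rw [Z, ← Finset.sum_filter, h2]
  refine (Finset.sum_bij (fun p _ => ({p.1, p.2} : Finset (GArrow 3))) ?_ ?_ ?_ ?_).symm
  · intro p hp
    rw [Finset.mem_filter] at hp ⊢
    obtain ⟨hmemp, hc⟩ := hp
    rw [Finset.mem_product] at hmemp
    refine ⟨Finset.mem_powerset.2 ?_, planar_of_cond12 hc⟩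
    intro c hc'
    rcases Finset.mem_insert.1 hc' with rfl | hc'
    · exact hmemp.1
    · rw [Finset.mem_singleton] at hc'; subst hc'; exact hmemp.2
  · intro p hp q hq he
    rw [Finset.mem_filter] at hp hq
    have h1 : p.1 = q.1 := by
      have he' : ({p.1, p.2} : Finset (GArrow 3)) = {q.1, q.2} := he
      have hm : p.1 ∈ ({q.1, q.2} : Finset (GArrow 3)) := he' ▸ Finset.mem_insert_self _ _
      rcases Finset.mem_insert.1 hm with hx | hx
      · exact hx
      · rw [Finset.mem_singleton] at hx
        have ht := hp.2.1
        rw [hx, hq.2.2.1] at ht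
        exact absurd ht (by decide)
    have h2 : p.2 = q.2 := by
      have he' : ({p.1, p.2} : Finset (GArrow 3)) = {q.1, q.2} := he
      have hm : p.2 ∈ ({q.1, q.2} : Finset (GArrow 3)) := he' ▸ (by simp)
      rcases Finset.mem_insert.1 hm with hx | hx
      · have ht := hp.2.2.1
        rw [hx, hq.2.1] at ht
        exact absurd ht (by decide)
      · exact Finset.mem_singleton.1 hx
    exact Prod.ext h1 h2
  · intro S hS
    rw [Finset.mem_filter, Finset.mem_powerset] at hS
    obtain ⟨a, b, rfl, hc⟩ := cond12_of_planar hS.1 hS.2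
    refine ⟨(a, b), ?_, rfl⟩
    rw [Finset.mem_filter, Finset.mem_product]
    exact ⟨⟨hS.1 (Finset.mem_insert_self _ _), hS.1 (by simp)⟩, hc⟩
  · intro p hp
    rw [Finset.mem_filter] at hp
    exact (treeSign_pair hp.2).symm

lemma Z1_eq {i : Fin 3} (hi : i ≠ 0) (G : GaussDiagram 3) :
    Z {i} 0 G = ∑ a ∈ G.arrows, singTerm i a := by
  have h2 : ∑ a ∈ G.arrows, singTerm i a
      = ∑ a ∈ G.arrows.filter (fun a => a.tailStr = i ∧ a.headStr = 0), a.sign := by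
    rw [Finset.sum_filter]
    exact Finset.sum_congr rfl fun a _ => rfl
  rw [Z, ← Finset.sum_filter, h2]
  refine (Finset.sum_bij (fun a _ => ({a} : Finset (GArrow 3))) ?_ ?_ ?_ ?_).symm
  · intro a ha
    rw [Finset.mem_filter] at ha ⊢
    exact ⟨Finset.mem_powerset.2 (Finset.singleton_subset_iff.2 ha.1),
      planar_of_cond1 hi ha.2.1 ha.2.2⟩
  · intro a _ b _ he
    exact Finset.singleton_inj.1 he
  · intro S hS
    rw [Finset.mem_filter, Finset.mem_powerset] at hS
    obtain ⟨a, rfl, h1, hh⟩ := cond1_of_planar hS.2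
    refine ⟨a, ?_, rfl⟩
    rw [Finset.mem_filter]
    exact ⟨hS.1 (Finset.mem_singleton_self a), h1, hh⟩
  · intro a ha
    rw [Finset.mem_filter] at ha
    unfold treeSign
    have hflt : ∀ k : Fin 3, ¬ k < (0 : Fin 3) := by decide
    rw [Finset.filter_singleton, if_neg (by rw [ha.2.2]; exact hflt _)]
    simp
@[simp] lemma rev_tailStr (i : Fin 3) (a : GArrow 3) :
    (reverseArrow i a).tailStr = a.tailStr := rfl

@[simp] lemma rev_headStr (i : Fin 3) (a : GArrow 3) :
    (reverseArrow i a).headStr = a.headStr := rfl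

lemma rev_tailPos (i : Fin 3) (a : GArrow 3) :
    (reverseArrow i a).tailPos = if a.tailStr = i then -a.tailPos else a.tailPos := rfl

lemma rev_headPos (i : Fin 3) (a : GArrow 3) :
    (reverseArrow i a).headPos = if a.headStr = i then -a.headPos else a.headPos := rfl

lemma rev_sign (i : Fin 3) (a : GArrow 3) :
    (reverseArrow i a).sign =
      if (a.tailStr = i ∧ a.headStr ≠ i) ∨ (a.tailStr ≠ i ∧ a.headStr = i)
      then -a.sign else a.sign := rfl

lemma reverseArrow_invol (a : GArrow 3) : reverseArrow 0 (reverseArrow 0 a) = a := by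
  obtain ⟨ts, tp, hs, hp, s⟩ := a
  simp only [reverseArrow]
  by_cases h1 : ts = 0 <;> by_cases h2 : hs = 0 <;> simp [h1, h2]

lemma key_pointwise (G : GaussDiagram 3) {a b : GArrow 3}
    (ha : a ∈ G.arrows) (hb : b ∈ G.arrows) :
    pairTerm (reverseArrow 0 a) (reverseArrow 0 b) + pairTerm a b
      = singTerm 1 a * singTerm 2 b := by
  by_cases h1 : a.tailStr = 1
  · by_cases h2 : b.tailStr = 2
    · rcases fin3 a.headStr with hA | hA | hA <;> rcases fin3 b.headStr with hB | hB | hB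
      · -- heads (0, 0)
        have hnepos : a.headPos ≠ b.headPos := by
          intro e
          have hab : a ≠ b := by
            intro e'; rw [e', h2] at h1; exact absurd h1 (by decide)
          exact hab (G.endpoints_distinct a ha b hb true true
            (by simp [GArrow.ep, hA, hB, e])).1
        rcases lt_trichotomy a.headPos b.headPos with hlt | heq | hgt
        · have hx : ¬ b.headPos < a.headPos := lt_asymm hlt
          simp [pairTerm, Cond12, singTerm, rev_headPos, rev_tailPos, rev_sign,
            h1, h2, hA, hB, hlt, hx, neg_lt_neg_iff]
        · exact absurd heq hnepos
        · have hx : ¬ a.headPos < b.headPos := lt_asymm hgt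
          simp [pairTerm, Cond12, singTerm, rev_headPos, rev_tailPos, rev_sign,
            h1, h2, hA, hB, hgt, hx, neg_lt_neg_iff]
      · -- heads (0, 1)
        by_cases hC : b.headPos < a.tailPos <;>
          simp [pairTerm, Cond12, singTerm, rev_headPos, rev_tailPos, rev_sign,
            h1, h2, hA, hB, hC]
      · -- heads (0, 2)
        simp [pairTerm, Cond12, singTerm, rev_headPos, rev_tailPos, rev_sign,
          h1, h2, hA, hB]
      · -- heads (1, 0)
        simp [pairTerm, Cond12, singTerm, rev_headPos, rev_tailPos, rev_sign,
          h1, h2, hA, hB]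
      · -- heads (1, 1)
        simp [pairTerm, Cond12, singTerm, rev_headPos, rev_tailPos, rev_sign,
          h1, h2, hA, hB]
      · -- heads (1, 2)
        simp [pairTerm, Cond12, singTerm, rev_headPos, rev_tailPos, rev_sign,
          h1, h2, hA, hB]
      · -- heads (2, 0)
        by_cases hC : a.headPos < b.tailPos <;>
          simp [pairTerm, Cond12, singTerm, rev_headPos, rev_tailPos, rev_sign,
            h1, h2, hA, hB, hC]
      · -- heads (2, 1)
        simp [pairTerm, Cond12, singTerm, rev_headPos, rev_tailPos, rev_sign,
          h1, h2, hA, hB]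
      · -- heads (2, 2)
        simp [pairTerm, Cond12, singTerm, rev_headPos, rev_tailPos, rev_sign,
          h1, h2, hA, hB]
    · simp [pairTerm, Cond12, singTerm, h2]
  · simp [pairTerm, Cond12, singTerm, h1]
/-- **Behavior of the degree-two tree invariant under orientation reversal.**
Let `G` be a Gauss diagram on `3` strings and let `G'` be obtained from `G` by
reversing the orientation of the first string.  Then (with strings numbered
`0, 1, 2`, so that the first string is `0`)
`Z_{{2,3},1}(G') = −Z_{{2,3},1}(G) + Z_{{2},1}(G) · Z_{{3},1}(G)`. -/
theorem degree_two_orientation_reversal (G G' : GaussDiagram 3)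
    (h : G'.arrows = G.arrows.image (reverseArrow 0)) :
    Z {1, 2} 0 G' = -Z {1, 2} 0 G + Z {1} 0 G * Z {2} 0 G := by
  have hinj : ∀ x ∈ G.arrows, ∀ y ∈ G.arrows,
      reverseArrow 0 x = reverseArrow 0 y → x = y := by
    intro x _ y _ e
    rw [← reverseArrow_invol x, e, reverseArrow_invol]
  rw [Z12_eq G', Z12_eq G, Z1_eq (show (1 : Fin 3) ≠ 0 by decide) G,
    Z1_eq (show (2 : Fin 3) ≠ 0 by decide) G, h]
  rw [Finset.sum_product, Finset.sum_product, Finset.sum_image hinj]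
  rw [Finset.sum_congr rfl (fun x (_ : x ∈ G.arrows) =>
    Finset.sum_image (f := fun y => pairTerm (reverseArrow 0 x) y) hinj)]
  have hkey : ∑ x ∈ G.arrows, ∑ y ∈ G.arrows,
        pairTerm (reverseArrow 0 x) (reverseArrow 0 y)
      = ∑ x ∈ G.arrows, ∑ y ∈ G.arrows,
        (singTerm 1 x * singTerm 2 y - pairTerm x y) := by
    refine Finset.sum_congr rfl fun x hx => Finset.sum_congr rfl fun y hy => ?_
    have hk := key_pointwise G hx hy
    linarith
  rw [hkey]
  simp only [Finset.sum_sub_distrib]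
  rw [Finset.sum_mul_sum]
  ring
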